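/- Fix 0 < L < U with κ := U/L, let n ∈ ℕ, and let f_n : ℝⁿ → ℝ be the quadratic f_n(x) = (1/2) xᵀ P x + q̃ᵀ x, where q̃ = (L(κ−1)/4)·e₁ and P = (L(κ−1)/4)·Q̃ + L·I with Q̃ the circulant matrix whose rows are successive circular shifts of the first row (2, −1, 0, …, 0, −1). Let x⁽⁰⁾, x⁽¹⁾, …, x⁽ᵏ⁾ be any sequence in ℝⁿ with x⁽⁰⁾ = 0 and x⁽ʲ⁾ ∈ span{∇f_n(x⁽⁰⁾), …, ∇f_n(x⁽ʲ⁻¹⁾)} for all 1 ≤ j ≤ k. Then for every coordinate index l with k + 1 ≤ l ≤ n − k + 1, the l-th entry of x⁽ᵏ⁾ is zero. -/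

import Mathlib

/-!
The gradient of `f_n` is `y ↦ P y + q̃`, where `P` couples only cyclically adjacent
coordinates and `q̃` is supported at index `0`. Hence if `y` vanishes at every index of
cyclic distance `≥ m` from `0`, then `∇f_n(y)` vanishes at every index of distance `≥ m + 1`.
These vanishing conditions define an increasing chain of subspaces, so by strong induction
each iterate `x⁽ʲ⁾`, a combination of gradients at earlier iterates, satisfies the `j`-th one.
-/

open scoped Matrix

/-- First row `(2, −1, 0, …, 0, −1)` of the circulant matrix `Q̃` (the `−1` entries at
positions `1` and `n−1` are added, so that the definition stays a genuine circulant for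
every `n`). -/
noncomputable def circRow (n : ℕ) : Fin n → ℝ := fun i =>
  (if i.val = 0 then (2 : ℝ) else 0) + (if i.val = 1 then (-1 : ℝ) else 0) +
    (if i.val = n - 1 then (-1 : ℝ) else 0)

/-- The matrix `P = (L(κ−1)/4)·Q̃ + L·I`. -/
noncomputable def Pmat (L κ : ℝ) (n : ℕ) : Matrix (Fin n) (Fin n) ℝ :=
  (L * (κ - 1) / 4) • Matrix.circulant (circRow n) + L • (1 : Matrix (Fin n) (Fin n) ℝ)

/-- The vector `q̃ = (L(κ−1)/4)·e₁`. -/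
noncomputable def qtilde (L κ : ℝ) (n : ℕ) : EuclideanSpace ℝ (Fin n) := WithLp.toLp 2 fun (i : Fin n) =>
  if i.val = 0 then L * (κ - 1) / 4 else 0

/-- The quadratic `f_n(x) = ½ xᵀ P x + q̃ᵀ x`. -/
noncomputable def fQuad (L κ : ℝ) (n : ℕ) (x : EuclideanSpace ℝ (Fin n)) : ℝ :=
  (1 / 2) * ((fun i => x i) ⬝ᵥ (Pmat L κ n).mulVec fun i => x i) +
    (fun i => qtilde L κ n i) ⬝ᵥ fun i => x i

open scoped RealInnerProductSpace

theorem fom_iterate_mem {R M : Type*} [Semiring R] [AddCommMonoid M] [Module R M]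
    {V : ℕ → Submodule R M} (hV : Monotone V) {g : M → M}
    (hg : ∀ m, ∀ y ∈ V m, g y ∈ V (m + 1)) {x : ℕ → M} {k : ℕ} (hx0 : x 0 ∈ V 0)
    (hspan : ∀ j, 1 ≤ j → j ≤ k → x j ∈ Submodule.span R {v | ∃ i < j, v = g (x i)}) :
    ∀ j ≤ k, x j ∈ V j := by
  intro j
  induction j using Nat.strong_induction_on with
  | _ j ih =>
    intro hjk
    rcases Nat.eq_zero_or_pos j with rfl | hj
    · exact hx0
    · refine Submodule.span_le.mpr ?_ (hspan j hj hjk)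
      rintro _ ⟨i, hij, rfl⟩
      exact hV hij (hg i _ (ih i hij (hij.le.trans hjk)))

theorem LinearMap.IsSymmetric.hasGradientAt_quadratic {F : Type*} [NormedAddCommGroup F]
    [InnerProductSpace ℝ F] [CompleteSpace F] {T : F →L[ℝ] F}
    (hT : (T : F →ₗ[ℝ] F).IsSymmetric) (q x : F) :
    HasGradientAt (fun y => (1 / 2 : ℝ) * ⟪T y, y⟫ + ⟪q, y⟫) (T x + q) x := by
  have hquad := ((hT.hasStrictFDerivAt_reApplyInnerSelf x).hasFDerivAt.const_mul (1 / 2 : ℝ)).add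
    (innerSL ℝ q).hasFDerivAt
  have hf : (fun y => (1 / 2 : ℝ) * ⟪T y, y⟫ + ⟪q, y⟫)
      = (fun y => (1 / 2 : ℝ) * T.reApplyInnerSelf y) + innerSL ℝ q := by
    funext y
    simp [ContinuousLinearMap.reApplyInnerSelf_apply]
  have hD : InnerProductSpace.toDual ℝ F (T x + q)
      = (1 / 2 : ℝ) • (2 : ℕ) • innerSL ℝ (T x) + innerSL ℝ q := by
    ext y
    simp
  rwa [hasGradientAt_iff_hasFDerivAt, hf, hD]

lemma circRow_neg (n : ℕ) (i : Fin n) : circRow n (-i) = circRow n i := by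
  rcases Nat.eq_zero_or_pos i.val with h0 | hpos
  · rw [show -i = i by ext; rw [Fin.val_neg', h0, Nat.sub_zero, Nat.mod_self]]
  · have hneg : (-i).val = n - i.val := by
      rw [Fin.val_neg', Nat.mod_eq_of_lt (by omega)]
    unfold circRow
    rw [hneg]
    split_ifs <;> norm_num <;> omega

lemma Pmat_isSymm (L κ : ℝ) (n : ℕ) : (Pmat L κ n).IsSymm :=
  ((Matrix.Fin.circulant_isSymm_iff.mpr (circRow_neg n)).smul _).add (Matrix.isSymm_one.smul _)

lemma fQuad_eq (L κ : ℝ) (n : ℕ) (y : EuclideanSpace ℝ (Fin n)) :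
    fQuad L κ n y = (1 / 2 : ℝ) * ⟪Matrix.toEuclideanCLM (𝕜 := ℝ) (Pmat L κ n) y, y⟫
      + ⟪qtilde L κ n, y⟫ := by
  rw [fQuad, real_inner_comm, Matrix.inner_toEuclideanCLM]
  simp [EuclideanSpace.inner_eq_star_dotProduct, dotProduct_comm]

lemma gradient_fQuad (L κ : ℝ) (n : ℕ) (y : EuclideanSpace ℝ (Fin n)) :
    gradient (fQuad L κ n) y = Matrix.toEuclideanCLM (𝕜 := ℝ) (Pmat L κ n) y + qtilde L κ n := by
  have hsymm : (Matrix.toEuclideanLin (Pmat L κ n)).IsSymmetric :=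
    Matrix.isSymmetric_toEuclideanLin_iff.mpr (Matrix.isHermitian_iff_isSymm.mpr (Pmat_isSymm L κ n))
  rw [funext (fQuad_eq L κ n)]
  exact (hsymm.hasGradientAt_quadratic (qtilde L κ n) y).gradient

/-- Vectors supported on the indices at cyclic distance less than `m` from `0`. -/
def supportedNearZero (n m : ℕ) : Submodule ℝ (EuclideanSpace ℝ (Fin n)) where
  carrier := {y | ∀ l : Fin n, m ≤ l.val → l.val + m ≤ n → y l = 0}
  add_mem' hy hz l h₁ h₂ := by simp [hy l h₁ h₂, hz l h₁ h₂]
  zero_mem' _ _ _ := rfl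
  smul_mem' c y hy l h₁ h₂ := by simp [hy l h₁ h₂]

lemma supportedNearZero_mono (n : ℕ) : Monotone (supportedNearZero n) :=
  fun _ _ hab _ hy l h₁ h₂ => hy l (by omega) (by omega)

lemma qtilde_mem_supportedNearZero (L κ : ℝ) (n : ℕ) : qtilde L κ n ∈ supportedNearZero n 1 := by
  intro l h₁ _
  simp only [qtilde, PiLp.toLp_apply]
  rw [if_neg (by omega)]

lemma circRow_eq_zero {n : ℕ} {i : Fin n} (h₁ : 2 ≤ i.val) (h₂ : i.val + 2 ≤ n) :
    circRow n i = 0 := by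
  simp only [circRow]
  rw [if_neg (by omega), if_neg (by omega), if_neg (by omega)]
  norm_num

lemma Pmat_apply_eq_zero (L κ : ℝ) {n : ℕ} {l j : Fin n} (h₁ : 2 ≤ (l - j).val)
    (h₂ : (l - j).val + 2 ≤ n) : Pmat L κ n l j = 0 := by
  have hlj : l ≠ j := by
    rintro rfl
    rw [Fin.sub_val_of_le le_rfl, Nat.sub_self] at h₁
    omega
  simp [Pmat, Matrix.circulant_apply, circRow_eq_zero h₁ h₂, hlj]

lemma two_le_val_sub {n m : ℕ} {l j : Fin n} (hl₁ : m + 1 ≤ l.val) (hl₂ : l.val + (m + 1) ≤ n)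
    (hj : ¬(m ≤ j.val ∧ j.val + m ≤ n)) : 2 ≤ (l - j).val ∧ (l - j).val + 2 ≤ n := by
  rcases le_or_gt j l with hle | hlt
  · have := Fin.le_def.mp hle
    rw [Fin.sub_val_of_le hle]
    omega
  · have := Fin.lt_def.mp hlt
    rw [Fin.coe_sub_iff_lt.mpr hlt]
    omega

lemma toEuclideanCLM_Pmat_mem_supportedNearZero (L κ : ℝ) {n m : ℕ}
    {y : EuclideanSpace ℝ (Fin n)} (hy : y ∈ supportedNearZero n m) :
    Matrix.toEuclideanCLM (𝕜 := ℝ) (Pmat L κ n) y ∈ supportedNearZero n (m + 1) := by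
  intro l hl₁ hl₂
  change ∑ j, Pmat L κ n l j * y j = 0
  refine Finset.sum_eq_zero fun j _ => ?_
  by_cases hj : m ≤ j.val ∧ j.val + m ≤ n
  · simp [hy j hj.1 hj.2]
  · obtain ⟨h₁, h₂⟩ := two_le_val_sub hl₁ hl₂ hj
    simp [Pmat_apply_eq_zero L κ h₁ h₂]

lemma gradient_fQuad_mem_supportedNearZero (L κ : ℝ) {n m : ℕ}
    {y : EuclideanSpace ℝ (Fin n)} (hy : y ∈ supportedNearZero n m) :
    gradient (fQuad L κ n) y ∈ supportedNearZero n (m + 1) := by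
  rw [gradient_fQuad]
  exact add_mem (toEuclideanCLM_Pmat_mem_supportedNearZero L κ hy)
    (supportedNearZero_mono n (by omega) (qtilde_mem_supportedNearZero L κ n))

-- With zero-indexed `l : Fin n`, the one-indexed range `k + 1 ≤ l ≤ n − k + 1` reads
-- `k ≤ l.val` and `l.val + k ≤ n`.
theorem fom_iterates_sparse_general (L : ℝ)
    (κ : ℝ) (n k : ℕ)
    (x : ℕ → EuclideanSpace ℝ (Fin n)) (hx0 : x 0 = 0)
    (hspan : ∀ j, 1 ≤ j → j ≤ k →
      x j ∈ Submodule.span ℝ {g | ∃ i < j, g = gradient (fQuad L κ n) (x i)}) :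
    ∀ l : Fin n, k ≤ l.val → l.val + k ≤ n → x k l = 0 :=
  fom_iterate_mem (supportedNearZero_mono n)
    (fun _ _ => gradient_fQuad_mem_supportedNearZero L κ) (hx0 ▸ zero_mem _) hspan k le_rfl

/-- For FOM iterates on `f_n`, i.e. `x⁽⁰⁾ = 0` and
`x⁽ʲ⁾ ∈ span{∇f_n(x⁽⁰⁾), …, ∇f_n(x⁽ʲ⁻¹⁾)}` for `1 ≤ j ≤ k`, every coordinate `l`
(one-indexed) with `k + 1 ≤ l ≤ n − k + 1` of `x⁽ᵏ⁾` vanishes. Zero-indexed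
`l : Fin n`, the condition reads `k ≤ l.val` and `l.val + k ≤ n`. -/
theorem fom_iterates_sparse (L U : ℝ) (hL : 0 < L) (hLU : L < U)
    (κ : ℝ) (hκ : κ = U / L) (n k : ℕ)
    (x : ℕ → EuclideanSpace ℝ (Fin n)) (hx0 : x 0 = 0)
    (hspan : ∀ j, 1 ≤ j → j ≤ k →
      x j ∈ Submodule.span ℝ {g | ∃ i < j, g = gradient (fQuad L κ n) (x i)}) :
    ∀ l : Fin n, k ≤ l.val → l.val + k ≤ n → x k l = 0 :=
  fom_iterates_sparse_general L κ n k x hx0 hspan
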